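/- If D_n ∈ C_n is a nonempty almost-connected configuration, then its diameter satisfies diam(D_n) := max_{x,y ∈ D_n} |x − y| ≤ π q · #∂D_n. -/

import Mathlib

open scoped BigOperators Classical Topology ENNReal
open Filter MeasureTheory

noncomputable section

/-!
Common setting: film lattice `L_F` with parameter `e_F = 1`, substrate spacing
`e_S = q/p` (`p, q` coprime positive integers), Heitmann–Radin potentials and the
configurational energy `V_n` (with values in `EReal`, since the Heitmann–Radin
potential takes the value `+∞` below distance `1`).
-/

/-- Points of the plane. -/
abbrev Pt : Type := ℝ × ℝ

/-- The lattice vector `t₁ = (1,0)`. -/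
def t1 : Pt := ((1 : ℝ), (0 : ℝ))

/-- The lattice vector `t₂ = (1/2, √3/2)`. -/
def t2 : Pt := ((1 / 2 : ℝ), Real.sqrt 3 / 2)

/-- Euclidean distance on `ℝ × ℝ`. -/
def dE (x y : Pt) : ℝ := Real.sqrt ((x.1 - y.1) ^ 2 + (x.2 - y.2) ^ 2)

/-- Substrate lattice spacing `e_S = q / p`. -/
def eS (p q : ℕ) : ℝ := (q : ℝ) / (p : ℝ)

/-- The film lattice `L_F = {(0, e_S) + k₁ t₁ + k₂ t₂ : k₁ ∈ ℤ, k₂ ∈ ℕ ∪ {0}}`. -/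
def LF (p q : ℕ) : Set Pt :=
  {x | ∃ (k₁ : ℤ) (k₂ : ℕ), x = (((0 : ℝ), eS p q) : Pt) + (k₁ : ℝ) • t1 + (k₂ : ℝ) • t2}

/-- The set `∂L_{FS} = {(k q, e_S) : k ∈ ℤ}` of lower-boundary film sites lying at
distance `e_S` above a substrate atom. -/
def bLFS (p q : ℕ) : Set Pt := {x | ∃ k : ℤ, x = (((k : ℝ) * (q : ℝ), eS p q) : Pt)}

/-- Crystalline configurations with `n` atoms: subsets of `L_F` of cardinality `n`. -/
def Cn (p q n : ℕ) : Set (Finset Pt) := {D | ↑D ⊆ LF p q ∧ D.card = n}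

/-- The Heitmann–Radin sticky-disc potential: `+∞` for `r < 1`, `-c_F` at `r = 1`,
`0` for `r > 1`. -/
def vF (cF : ℝ) (r : ℝ) : EReal :=
  if r < 1 then (⊤ : EReal) else if r = 1 then ((-cF : ℝ) : EReal) else (0 : EReal)

/-- The one-body substrate potential `v¹`: `-c_S` on `∂L_{FS}`, `0` otherwise. -/
def v1 (cS : ℝ) (p q : ℕ) (x : Pt) : ℝ := if x ∈ bLFS p q then -cS else 0

/-- The total energy `V_n(D) = Σ_{(x,y) ∈ D×D, x ≠ y} v_F(|x-y|) + Σ_{x ∈ D} v¹(x)`. -/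
def Vn (cF cS : ℝ) (p q : ℕ) (D : Finset Pt) : EReal :=
  (∑ e ∈ D.offDiag, vF cF (dE e.1 e.2)) + (((∑ x ∈ D, v1 cS p q x) : ℝ) : EReal)

/-- The dewetting condition: `c_S < 4c_F` if `q = 1` and `c_S < 6c_F` if `q ≠ 1`. -/
def Dewetting (cF cS : ℝ) (q : ℕ) : Prop := if q = 1 then cS < 4 * cF else cS < 6 * cF

/-- The boundary `∂D` of a configuration: atoms with fewer than `6` film neighbours. -/
def bdry (D : Finset Pt) : Finset Pt :=
  D.filter fun x => (D.filter fun y => dE x y = 1).card < 6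

/-- The empirical measure `μ_{D_n} = (1/n) Σ_{x ∈ D_n} δ_{x/√n}`. -/
def emp (n : ℕ) (D : Finset Pt) : Measure Pt :=
  ((n : ℝ≥0∞))⁻¹ • ∑ x ∈ D, Measure.dirac (((Real.sqrt n)⁻¹ : ℝ) • x)

/-- A configuration of `n` consecutive sites `{w, w + t₁, …, w + (n-1) t₁}` on `∂L_{FS}`. -/
def IsConsecutive (p q n : ℕ) (Dw : Finset Pt) : Prop :=
  ∃ w : Pt, w ∈ bLFS p q ∧ Dw = (Finset.range n).image fun i => w + (i : ℝ) • t1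

/-- Two atoms joined by a chain of atoms of `D` with consecutive distances `1`. -/
def chainConn (D : Finset Pt) (x y : Pt) : Prop :=
  Relation.ReflTransGen (fun a b => a ∈ D ∧ b ∈ D ∧ dE a b = 1) x y

/-- Connectedness of a configuration. -/
def IsConnectedConf (D : Finset Pt) : Prop := ∀ x ∈ D, ∀ y ∈ D, chainConn D x y

/-- `C` is a connected component of `D` (the set of atoms of `D` chain-connected to
some atom of `D`). -/
def IsComponent (D C : Finset Pt) : Prop :=
  ∃ x ∈ D, ∀ y : Pt, y ∈ C ↔ y ∈ D ∧ chainConn D x y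

/-- Almost-connectedness: connected if `q = 1`; if `q ≠ 1`, the connected components
can be enumerated so that each one is at distance at most `q` from the union of the
previous ones. -/
def AlmostConnected (q : ℕ) (D : Finset Pt) : Prop :=
  if q = 1 then IsConnectedConf D
  else
    ∃ (k : ℕ) (f : Fin k → Finset Pt),
      Function.Injective f ∧
      (∀ i, IsComponent D (f i)) ∧
      (∀ C : Finset Pt, IsComponent D C → ∃ i, C = f i) ∧
      (∀ i : Fin k, 1 ≤ (i : ℕ) →
        ∃ x ∈ f i, ∃ j : Fin k, j < i ∧ ∃ y ∈ f j, dE x y ≤ (q : ℝ))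

/-- Local energy `E_loc(x)` of a site with respect to the configuration `D`. -/
def Eloc (cF : ℝ) (D : Finset Pt) (x : Pt) : ℝ :=
  if x ∈ D then cF * (6 - ((D.filter fun y => dE x y = 1).card : ℝ)) else 0

/-- Height `y_M` of the topmost atom of `D` in the column of `x`. -/
def yM (D : Finset Pt) (x : Pt) : ℝ := sSup {y : ℝ | ((x.1, y) : Pt) ∈ D}

/-- The strip top `x̃ = (x¹, y_M)`. -/
def til (D : Finset Pt) (x : Pt) : Pt := (x.1, yM D x)

/-- The weight `w₊(x̃)`. -/
def wPlus (p q : ℕ) (D : Finset Pt) (x : Pt) : ℝ :=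
  if x + t1 ∈ D ∧ x + t1 ∈ bLFS p q ∧ til D x + t2 = til D (x + t1) + t2 - t1 then 1 / 2 else 1

/-- The weight `w₋(x̃)`. -/
def wMinus (p q : ℕ) (D : Finset Pt) (x : Pt) : ℝ :=
  if x - t1 ∈ D ∧ x - t1 ∈ bLFS p q ∧ til D x + t2 - t1 = til D (x - t1) + t2 then 1 / 2 else 1

/-- Lower strip energy `E_strip,below(x)`. -/
def EStripBelow (cF cS : ℝ) (p q : ℕ) (D : Finset Pt) (x : Pt) : ℝ :=
  if q = 1 then
    (1 / 2) * Eloc cF D x + (1 / 4) * Eloc cF D (x + t1) + (1 / 4) * Eloc cF D (x - t1) - cS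
  else
    Eloc cF D x + (1 / 2) * Eloc cF D (x + t1) + (1 / 2) * Eloc cF D (x - t1) - cS

/-- Upper strip energy `E_strip,above(x)`. -/
def EStripAbove (cF : ℝ) (p q : ℕ) (D : Finset Pt) (x : Pt) : ℝ :=
  (if til D x ≠ x then Eloc cF D (til D x) else 0) +
    wPlus p q D x * Eloc cF D (til D x + t2) +
    wMinus p q D x * Eloc cF D (til D x + t2 - t1)

/-- The strip energy `E_strip(x) = E_strip,below(x) + E_strip,above(x)`. -/
def EStrip (cF cS : ℝ) (p q : ℕ) (D : Finset Pt) (x : Pt) : ℝ :=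
  EStripBelow cF cS p q D x + EStripAbove cF p q D x

/-- `Δ_strip`: `4c_F - c_S` if `q = 1`, `6c_F - c_S` if `q ≠ 1`. -/
def DeltaStrip (cF cS : ℝ) (q : ℕ) : ℝ := if q = 1 then 4 * cF - cS else 6 * cF - cS

/-- The union `S(∂L_{FS})` of all strips of the configuration `D`. -/
def SLFS (p q : ℕ) (D : Finset Pt) : Finset Pt :=
  D.filter fun y => ∃ x, x ∈ D ∧ x ∈ bLFS p q ∧
    (y = x ∨ y = x + t1 ∨ y = x - t1 ∨ y = til D x ∨ y = til D x + t2 ∨ y = til D x + t2 - t1)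

/-- The rescaled energy `E_n(μ_{D_n}) = n^{-1/2} (V_n(D_n) + 6 c_F n)`. -/
def En (cF cS : ℝ) (p q n : ℕ) (D : Finset Pt) : EReal :=
  ((((Real.sqrt n)⁻¹ : ℝ)) : EReal) * (Vn cF cS p q D + ((6 * cF * (n : ℝ) : ℝ) : EReal))

/-!
Write a lattice vector as `a t₁ + b t₂`. Its Euclidean length is at most its hexagonal norm
`max (|a|, |b|, |a + b|)`, so it suffices to bound the variation over `D` of the three lattice
coordinates `ℓ = a, b, a + b`. Each such `ℓ` is constant along a lattice direction `u`, and along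
a unit bond it changes by at most one. In a connected component `C`, `ℓ` therefore takes every
integer between any two of its values, and each value is attained at an atom of `C` whose
`u`-neighbour is missing, i.e. at a boundary atom; so `ℓ` varies by less than `#(C ∩ ∂D)` on `C`.
Jumping from a component to an earlier one at distance at most `q` changes `ℓ` by at most
`2q/√3`. Summing along the enumeration of the components gives
`|ℓ x - ℓ y| ≤ (2/√3) q #∂D ≤ π q #∂D`.
-/

lemma sqrt_three_sq : √3 ^ 2 = 3 := Real.sq_sqrt (by norm_num)

lemma dE_eq_sqrt_sub (x y : Pt) : dE x y = √((y - x).1 ^ 2 + (y - x).2 ^ 2) := by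
  unfold dE; congr 1; simp only [Prod.fst_sub, Prod.snd_sub]; ring

lemma dE_comm (x y : Pt) : dE x y = dE y x := by
  unfold dE; ring_nf

lemma normSq_lattice (A B : ℝ) :
    (A • t1 + B • t2).1 ^ 2 + (A • t1 + B • t2).2 ^ 2 = A ^ 2 + A * B + B ^ 2 := by
  simp only [t1, t2, Prod.fst_add, Prod.snd_add, Prod.smul_fst, Prod.smul_snd, smul_eq_mul]
  linear_combination (B ^ 2 / 4) * sqrt_three_sq

lemma exists_sub_eq_of_mem_LF {p q : ℕ} {x y : Pt} (hx : x ∈ LF p q) (hy : y ∈ LF p q) :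
    ∃ A B : ℤ, y - x = (A : ℝ) • t1 + (B : ℝ) • t2 := by
  obtain ⟨a, b, rfl⟩ := hx
  obtain ⟨a', b', rfl⟩ := hy
  refine ⟨a' - a, b' - b, ?_⟩
  push_cast
  simp only [sub_smul]
  abel

def unitVecs : Finset Pt := {t1, -t1, t2, -t2, t1 - t2, t2 - t1}

lemma dE_add_of_mem_unitVecs {v : Pt} (hv : v ∈ unitVecs) (x : Pt) : dE x (x + v) = 1 := by
  have key (A B : ℤ) (h : A ^ 2 + A * B + B ^ 2 = 1) :
      dE x (x + ((A : ℝ) • t1 + (B : ℝ) • t2)) = 1 := by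
    rw [dE_eq_sqrt_sub, add_sub_cancel_left, normSq_lattice]
    exact_mod_cast (Real.sqrt_eq_one.mpr (by exact_mod_cast h))
  simp only [unitVecs, Finset.mem_insert, Finset.mem_singleton] at hv
  rcases hv with rfl | rfl | rfl | rfl | rfl | rfl
  · simpa using key 1 0 rfl
  · simpa using key (-1) 0 rfl
  · simpa using key 0 1 rfl
  · simpa using key 0 (-1) rfl
  · simpa [sub_eq_add_neg] using key 1 (-1) rfl
  · simpa [sub_eq_add_neg, add_comm] using key (-1) 1 rfl

lemma sub_mem_unitVecs {p q : ℕ} {x y : Pt} (hx : x ∈ LF p q) (hy : y ∈ LF p q)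
    (hd : dE x y = 1) : y - x ∈ unitVecs := by
  obtain ⟨A, B, hAB⟩ := exists_sub_eq_of_mem_LF hx hy
  rw [dE_eq_sqrt_sub, hAB, normSq_lattice, Real.sqrt_eq_one] at hd
  have h : A ^ 2 + A * B + B ^ 2 = 1 := by exact_mod_cast hd
  have hA : |A| ≤ 1 := by nlinarith [sq_nonneg (A + 2 * B), sq_abs A, abs_nonneg A]
  have hB : |B| ≤ 1 := by nlinarith [sq_nonneg (2 * A + B), sq_abs B, abs_nonneg B]
  rw [hAB]
  obtain ⟨hA₁, hA₂⟩ := abs_le.mp hA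
  obtain ⟨hB₁, hB₂⟩ := abs_le.mp hB
  interval_cases A <;> interval_cases B <;> norm_num at h <;>
    simp [unitVecs, sub_eq_add_neg, add_comm]

lemma Finset.exists_add_notMem {S : Finset Pt} (hS : S.Nonempty) {u : Pt} (hu : u ≠ 0) :
    ∃ z ∈ S, z + u ∉ S := by
  obtain ⟨z, hz, hmax⟩ := S.exists_max_image (fun z => u.1 * z.1 + u.2 * z.2) hS
  refine ⟨z, hz, fun hzu => ?_⟩
  have hpos : 0 < u.1 ^ 2 + u.2 ^ 2 := by
    rcases ne_or_eq u.1 0 with h | h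
    · positivity
    · have : u.2 ≠ 0 := fun h' => hu (Prod.ext h h')
      positivity
  have := hmax _ hzu
  simp only [Prod.fst_add, Prod.snd_add] at this
  nlinarith

lemma ne_zero_of_mem_unitVecs {u : Pt} (hu : u ∈ unitVecs) : u ≠ 0 := by
  rintro rfl
  simpa [dE] using dE_add_of_mem_unitVecs hu 0

lemma mem_bdry_of_add_notMem {p q : ℕ} {D : Finset Pt} (hD : ↑D ⊆ LF p q) {x u : Pt} (hx : x ∈ D)
    (hu : u ∈ unitVecs) (hxu : x + u ∉ D) : x ∈ bdry D := by
  refine Finset.mem_filter.mpr ⟨hx, ?_⟩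
  have hsub : D.filter (fun y => dE x y = 1) ⊆ (unitVecs.erase u).image (x + ·) := by
    intro y hy
    obtain ⟨hyD, hd⟩ := Finset.mem_filter.mp hy
    refine Finset.mem_image.mpr
      ⟨y - x, Finset.mem_erase.mpr ⟨?_, sub_mem_unitVecs (hD hx) (hD hyD) hd⟩, add_sub_cancel x y⟩
    rintro rfl
    exact hxu (by rwa [add_sub_cancel])
  calc (D.filter fun y => dE x y = 1).card
      ≤ (unitVecs.erase u).card := (Finset.card_le_card hsub).trans Finset.card_image_le
    _ < unitVecs.card := Finset.card_erase_lt_of_mem hu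
    _ ≤ 6 := Finset.card_le_six

-- Coordinates in the basis `t₁, t₂` with origin `(0, e_S)`: `L_F` is `{coord1 ∈ ℤ, coord2 ∈ ℕ}`.
def coord1 (p q : ℕ) (x : Pt) : ℝ := x.1 - (x.2 - eS p q) / √3

def coord2 (p q : ℕ) (x : Pt) : ℝ := 2 * (x.2 - eS p q) / √3

lemma coord1_lattice (p q : ℕ) (a b : ℝ) :
    coord1 p q (((0 : ℝ), eS p q) + a • t1 + b • t2) = a := by
  simp only [coord1, t1, t2, Prod.fst_add, Prod.snd_add, Prod.smul_fst, Prod.smul_snd, smul_eq_mul]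
  field_simp
  ring

lemma coord2_lattice (p q : ℕ) (a b : ℝ) :
    coord2 p q (((0 : ℝ), eS p q) + a • t1 + b • t2) = b := by
  simp only [coord2, t1, t2, Prod.snd_add, Prod.smul_snd, smul_eq_mul]
  field_simp
  ring

lemma dE_eq_sqrt_coord (p q : ℕ) (x y : Pt) :
    dE x y = √((coord1 p q x - coord1 p q y) ^ 2
      + (coord1 p q x - coord1 p q y) * (coord2 p q x - coord2 p q y)
      + (coord2 p q x - coord2 p q y) ^ 2) := by
  unfold dE coord1 coord2
  congr 1
  field_simp
  linear_combination (x.2 - y.2) ^ 2 * sqrt_three_sq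

lemma sq_add_mul_add_sq_le_sq_max (a b : ℝ) :
    a ^ 2 + a * b + b ^ 2 ≤ max |a| (max |b| |a + b|) ^ 2 := by
  set M := max |a| (max |b| |a + b|)
  have hsq {c : ℝ} (hc : |c| ≤ M) : c ^ 2 ≤ M ^ 2 := by
    simpa only [sq_abs] using pow_le_pow_left₀ (abs_nonneg c) hc 2
  have ha := hsq (le_max_left _ _)
  have hb := hsq ((le_max_left _ _).trans (le_max_right _ _))
  have hab := hsq ((le_max_right _ _).trans (le_max_right _ _))
  rcases le_total 0 (a * b) with h | h
  · nlinarith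
  · rcases le_total (a ^ 2) (b ^ 2) with h' | h'
    · nlinarith [sq_nonneg (a + b), sq_nonneg a]
    · nlinarith

lemma dE_le_max_abs_coord (p q : ℕ) (x y : Pt) :
    dE x y ≤ max |coord1 p q x - coord1 p q y| (max |coord2 p q x - coord2 p q y|
      |(coord1 p q x + coord2 p q x) - (coord1 p q y + coord2 p q y)|) := by
  rw [dE_eq_sqrt_coord p q, add_sub_add_comm]
  exact (Real.sqrt_le_left (le_max_of_le_left (abs_nonneg _))).mpr
    (sq_add_mul_add_sq_le_sq_max _ _)

lemma abs_mul_sub_add_mul_sub_le_dE {a b : ℝ} (hab : a ^ 2 + b ^ 2 = 1) (x y : Pt) :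
    |a * (x.1 - y.1) + b * (x.2 - y.2)| ≤ dE x y :=
  Real.abs_le_sqrt (by nlinarith [sq_nonneg (a * (x.2 - y.2) - b * (x.1 - y.1))])

structure IsLevelFunctional (p q : ℕ) (ℓ : Pt → ℝ) (u : Pt) : Prop where
  exists_int : ∀ x ∈ LF p q, ∃ m : ℤ, ℓ x = m
  abs_sub_le : ∀ x y, |ℓ x - ℓ y| ≤ 2 / √3 * dE x y
  add_dir : ∀ x, ℓ (x + u) = ℓ x
  dir_mem : u ∈ unitVecs

lemma abs_sub_le_of_sub_eq {ℓ : Pt → ℝ} {a b : ℝ} (hab : a ^ 2 + b ^ 2 = 1)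
    (h : ∀ x y, ℓ x - ℓ y = 2 / √3 * (a * (x.1 - y.1) + b * (x.2 - y.2))) (x y : Pt) :
    |ℓ x - ℓ y| ≤ 2 / √3 * dE x y := by
  rw [h, abs_mul, abs_of_pos (by positivity)]
  exact mul_le_mul_of_nonneg_left (abs_mul_sub_add_mul_sub_le_dE hab x y) (by positivity)

lemma isLevelFunctional_coord1 (p q : ℕ) : IsLevelFunctional p q (coord1 p q) t2 where
  exists_int := by
    rintro _ ⟨a, b, rfl⟩
    exact ⟨a, coord1_lattice p q a b⟩
  abs_sub_le := abs_sub_le_of_sub_eq (a := √3 / 2) (b := -1 / 2)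
    (by linear_combination sqrt_three_sq / 4) (fun x y => by unfold coord1; field_simp; ring)
  add_dir x := by
    simp only [coord1, t2, Prod.fst_add, Prod.snd_add]
    field_simp
    ring
  dir_mem := by simp [unitVecs]

lemma isLevelFunctional_coord2 (p q : ℕ) : IsLevelFunctional p q (coord2 p q) t1 where
  exists_int := by
    rintro _ ⟨a, b, rfl⟩
    exact ⟨b, coord2_lattice p q a b⟩
  abs_sub_le := abs_sub_le_of_sub_eq (a := 0) (b := 1) (by norm_num)
    (fun x y => by unfold coord2; field_simp; ring)
  add_dir x := by simp [coord2, t1]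
  dir_mem := by simp [unitVecs]

lemma isLevelFunctional_coord1_add_coord2 (p q : ℕ) :
    IsLevelFunctional p q (fun x => coord1 p q x + coord2 p q x) (t1 - t2) where
  exists_int := by
    rintro _ ⟨a, b, rfl⟩
    exact ⟨a + b, by rw [coord1_lattice, coord2_lattice]; push_cast; ring⟩
  abs_sub_le := abs_sub_le_of_sub_eq (a := √3 / 2) (b := 1 / 2)
    (by linear_combination sqrt_three_sq / 4) (fun x y => by unfold coord1 coord2; field_simp; ring)
  add_dir x := by
    simp only [coord1, coord2, t1, t2, Prod.fst_add, Prod.snd_add, Prod.fst_sub, Prod.snd_sub]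
    field_simp
    ring
  dir_mem := by simp [unitVecs]

lemma two_div_sqrt_three_lt_two : 2 / √3 < 2 :=
  div_lt_self two_pos (by rw [Real.lt_sqrt zero_le_one]; norm_num)

lemma one_le_two_div_sqrt_three : 1 ≤ 2 / √3 := by
  rw [le_div_iff₀ (by positivity), one_mul, Real.sqrt_le_left (by norm_num)]
  norm_num

lemma two_div_sqrt_three_le_pi : 2 / √3 ≤ Real.pi := by
  linarith [two_div_sqrt_three_lt_two, Real.pi_gt_three]

section Components

variable {D C : Finset Pt}

lemma chainConn_symm {x y : Pt} (h : chainConn D x y) : chainConn D y x :=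
  Relation.ReflTransGen.mono (fun _ _ ⟨ha, hb, hd⟩ => ⟨hb, ha, by rwa [dE_comm]⟩) _ _
    (Relation.ReflTransGen.swap _ _ h)

lemma IsComponent.mem_iff (hC : IsComponent D C) {x y : Pt} (hx : x ∈ C) :
    y ∈ C ↔ y ∈ D ∧ chainConn D x y := by
  obtain ⟨x₀, -, hC⟩ := hC
  have hx₀ := ((hC x).mp hx).2
  rw [hC]
  exact and_congr_right fun _ =>
    ⟨fun h => (chainConn_symm hx₀).trans h, fun h => hx₀.trans h⟩

lemma IsComponent.subset (hC : IsComponent D C) : C ⊆ D := by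
  obtain ⟨x₀, -, hC⟩ := hC
  exact fun y hy => ((hC y).mp hy).1

lemma IsComponent.nonempty (hC : IsComponent D C) : C.Nonempty := by
  obtain ⟨x₀, hx₀, hC⟩ := hC
  exact ⟨x₀, (hC x₀).mpr ⟨hx₀, .refl⟩⟩

lemma IsComponent.mem_of_dE_eq_one (hC : IsComponent D C) {z w : Pt} (hz : z ∈ C) (hw : w ∈ D)
    (hd : dE z w = 1) : w ∈ C :=
  (hC.mem_iff hz).mpr ⟨hw, .single ⟨hC.subset hz, hw, hd⟩⟩

lemma IsComponent.disjoint {C' : Finset Pt} (hC : IsComponent D C) (hC' : IsComponent D C')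
    (hne : C ≠ C') : Disjoint C C' := by
  refine Finset.disjoint_left.mpr fun z hz hz' => hne (Finset.ext fun y => ?_)
  rw [hC.mem_iff hz, hC'.mem_iff hz']

lemma isComponent_filter_chainConn {z : Pt} (hz : z ∈ D) :
    IsComponent D (D.filter (chainConn D z)) :=
  ⟨z, hz, fun _ => Finset.mem_filter⟩

lemma IsConnectedConf.isComponent_self (hD : IsConnectedConf D) {x : Pt} (hx : x ∈ D) :
    IsComponent D D :=
  ⟨x, hx, fun y => ⟨fun hy => ⟨hy, hD x hx y hy⟩, And.left⟩⟩

lemma exists_eq_of_chainConn (F : Pt → ℤ) (hF : ∀ a ∈ D, ∀ b ∈ D, dE a b = 1 → |F a - F b| ≤ 1)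
    {x y : Pt} (hx : x ∈ D) (h : chainConn D x y) {m : ℤ} (hm : m ∈ Finset.uIcc (F x) (F y)) :
    ∃ z ∈ D, chainConn D x z ∧ F z = m := by
  induction h with
  | refl => exact ⟨x, hx, .refl, by rw [Finset.mem_uIcc] at hm; omega⟩
  | @tail b c hxb hbc ih =>
    obtain ⟨hb, hc, hd⟩ := hbc
    have hstep := abs_le.mp (hF b hb c hc hd)
    by_cases hm' : m ∈ Finset.uIcc (F x) (F b)
    · exact ih hm'
    · refine ⟨c, hc, hxb.tail ⟨hb, hc, hd⟩, ?_⟩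
      rw [Finset.mem_uIcc] at hm hm'
      omega

lemma IsComponent.natAbs_sub_add_one_le_card_image (hC : IsComponent D C) (F : Pt → ℤ)
    (hF : ∀ a ∈ D, ∀ b ∈ D, dE a b = 1 → |F a - F b| ≤ 1) {x y : Pt} (hx : x ∈ C) (hy : y ∈ C) :
    (F y - F x).natAbs + 1 ≤ (C.image F).card := by
  rw [← Int.card_uIcc]
  refine Finset.card_le_card fun m hm => ?_
  obtain ⟨z, hz, hxz, rfl⟩ :=
    exists_eq_of_chainConn F hF (hC.subset hx) ((hC.mem_iff hx).mp hy).2 hm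
  exact Finset.mem_image_of_mem F ((hC.mem_iff hx).mpr ⟨hz, hxz⟩)

end Components

/-- Each level line `{F = F z}` of a component ends, in the direction `u`, at a boundary atom. -/
lemma IsComponent.card_image_le_card_inter_bdry {p q : ℕ} {D C : Finset Pt} (hD : ↑D ⊆ LF p q)
    (hC : IsComponent D C) (F : Pt → ℤ) {u : Pt} (hFu : ∀ z, F (z + u) = F z)
    (hu : u ∈ unitVecs) : (C.image F).card ≤ (C ∩ bdry D).card := by
  refine (Finset.card_le_card fun m hm => ?_).trans (Finset.card_image_le (f := F))
  obtain ⟨z, hz, rfl⟩ := Finset.mem_image.mp hm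
  obtain ⟨w, hw, hwu⟩ := Finset.exists_add_notMem (S := C.filter (F · = F z)) ⟨z, by simp [hz]⟩
    (ne_zero_of_mem_unitVecs hu)
  obtain ⟨hwC, hwF⟩ := Finset.mem_filter.mp hw
  have hwuD : w + u ∉ D := fun h => hwu (Finset.mem_filter.mpr
    ⟨hC.mem_of_dE_eq_one hwC h (dE_add_of_mem_unitVecs hu w), by rw [hFu, hwF]⟩)
  have hwB := mem_bdry_of_add_notMem hD (hC.subset hwC) hu hwuD
  exact Finset.mem_image.mpr ⟨w, Finset.mem_inter.mpr ⟨hwC, hwB⟩, hwF⟩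

theorem Metric.diam_iUnion_le_of_chain {α : Type*} [PseudoMetricSpace α] {c : ℝ} :
    ∀ {k : ℕ} (S : Fin (k + 1) → Set α),
      (∀ i : Fin (k + 1), 1 ≤ (i : ℕ) → ∃ j < i, ∃ a ∈ S i, ∃ b ∈ S j, dist a b ≤ c) →
      diam (⋃ i, S i) ≤ ∑ i, diam (S i) + k * c
  | 0, S, _ => by simp [Set.iUnion_fin_add_one_eq_iUnion_castSucc]
  | k + 1, S, hlink => by
    obtain ⟨j, hj, a, ha, b, hb, hab⟩ := hlink (Fin.last _) (by simp)
    have hb' : b ∈ ⋃ i : Fin (k + 1), S i.castSucc :=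
      Set.mem_iUnion.mpr ⟨j.castLT hj, by rwa [Fin.castSucc_castLT]⟩
    have ih := Metric.diam_iUnion_le_of_chain (S ∘ Fin.castSucc) fun i hi => by
      obtain ⟨j, hj, h⟩ := hlink i.castSucc hi
      have hjk : (j : ℕ) < k + 1 := hj.trans i.castSucc_lt_last
      exact ⟨j.castLT hjk, hj, by simpa [Fin.castSucc_castLT] using h⟩
    rw [Set.iUnion_fin_add_one_eq_iUnion_castSucc, Fin.sum_univ_castSucc]
    calc diam (Set.iUnion (S ∘ Fin.castSucc) ∪ S (Fin.last _))
        ≤ diam (Set.iUnion (S ∘ Fin.castSucc)) + dist b a + diam (S (Fin.last _)) :=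
          Metric.diam_union hb' ha
      _ ≤ (∑ i : Fin (k + 1), diam (S i.castSucc) + k * c) + c + diam (S (Fin.last _)) := by
          gcongr
          · exact ih
          · rwa [dist_comm]
      _ = _ := by push_cast; ring

structure ComponentChain (q : ℕ) (D : Finset Pt) (k : ℕ) (f : Fin (k + 1) → Finset Pt) : Prop where
  isComponent : ∀ i, IsComponent D (f i)
  pairwise_disjoint : Pairwise fun i j => Disjoint (f i) (f j)
  cover : ∀ z ∈ D, ∃ i, z ∈ f i
  link : ∀ i : Fin (k + 1), 1 ≤ (i : ℕ) → ∃ j < i, ∃ x ∈ f i, ∃ y ∈ f j, dE x y ≤ q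

lemma AlmostConnected.exists_componentChain {q : ℕ} {D : Finset Pt} (h : AlmostConnected q D)
    (hne : D.Nonempty) : ∃ k f, ComponentChain q D k f := by
  obtain ⟨x, hx⟩ := hne
  unfold AlmostConnected at h
  split_ifs at h
  · exact ⟨0, fun _ => D,
      { isComponent := fun _ => h.isComponent_self hx
        pairwise_disjoint := fun i j hij => (hij (Fin.ext (by omega))).elim
        cover := fun z hz => ⟨0, hz⟩
        link := fun i hi => by omega }⟩
  · obtain ⟨k, f, hinj, hcomp, hall, hlink⟩ := h
    have hcover : ∀ z ∈ D, ∃ i, z ∈ f i := fun z hz => by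
      obtain ⟨i, hi⟩ := hall _ (isComponent_filter_chainConn hz)
      exact ⟨i, hi ▸ Finset.mem_filter.mpr ⟨hz, .refl⟩⟩
    obtain ⟨i, -⟩ := hcover x hx
    obtain ⟨k, rfl⟩ := Nat.exists_eq_add_one_of_ne_zero i.pos.ne'
    exact ⟨k, f,
      { isComponent := hcomp
        pairwise_disjoint := fun i j hij => (hcomp i).disjoint (hcomp j) (hinj.ne hij)
        cover := hcover
        link := fun i hi => by
          obtain ⟨x, hx, j, hj, y, hy, hxy⟩ := hlink i hi
          exact ⟨j, hj, x, hx, y, hy, hxy⟩ }⟩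

lemma ComponentChain.sum_card_inter_le {q k : ℕ} {D : Finset Pt} {f : Fin (k + 1) → Finset Pt}
    (hf : ComponentChain q D k f) (B : Finset Pt) : ∑ i, (f i ∩ B).card ≤ B.card := by
  rw [← Finset.card_biUnion fun i _ j _ hij =>
    ((hf.pairwise_disjoint hij).mono Finset.inter_subset_left Finset.inter_subset_left)]
  exact Finset.card_le_card (Finset.biUnion_subset.mpr fun i _ => Finset.inter_subset_right)

namespace IsLevelFunctional

variable {p q : ℕ} {ℓ : Pt → ℝ} {u : Pt}

lemma intCast_round (hℓ : IsLevelFunctional p q ℓ u) {x : Pt} (hx : x ∈ LF p q) :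
    (round (ℓ x) : ℝ) = ℓ x := by
  obtain ⟨m, hm⟩ := hℓ.exists_int x hx
  rw [hm, round_intCast]

lemma abs_round_sub_le_one (hℓ : IsLevelFunctional p q ℓ u) {x y : Pt} (hx : x ∈ LF p q)
    (hy : y ∈ LF p q) (hd : dE x y = 1) : |round (ℓ x) - round (ℓ y)| ≤ 1 := by
  have h : ((|round (ℓ x) - round (ℓ y)| : ℤ) : ℝ) < 2 := by
    push_cast
    rw [hℓ.intCast_round hx, hℓ.intCast_round hy]
    exact (hℓ.abs_sub_le x y).trans_lt (by rw [hd, mul_one]; exact two_div_sqrt_three_lt_two)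
  exact Int.lt_add_one_iff.mp (by exact_mod_cast h)

lemma diam_image_le (hℓ : IsLevelFunctional p q ℓ u) {D C : Finset Pt} (hD : ↑D ⊆ LF p q)
    (hC : IsComponent D C) : Metric.diam (ℓ '' C) ≤ (C ∩ bdry D).card - 1 := by
  have hF : ∀ a ∈ D, ∀ b ∈ D, dE a b = 1 → |round (ℓ a) - round (ℓ b)| ≤ 1 :=
    fun a ha b hb => hℓ.abs_round_sub_le_one (hD ha) (hD hb)
  have hcard := hC.card_image_le_card_inter_bdry hD (fun z => round (ℓ z))
    (fun z => by rw [hℓ.add_dir]) hℓ.dir_mem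
  have hspan {x y : Pt} (hx : x ∈ C) (hy : y ∈ C) : |ℓ x - ℓ y| + 1 ≤ (C ∩ bdry D).card := by
    have h : (((round (ℓ x) - round (ℓ y)).natAbs : ℤ) : ℝ) + 1 ≤ (C ∩ bdry D).card := by
      exact_mod_cast (hC.natAbs_sub_add_one_le_card_image _ hF hy hx).trans hcard
    rwa [Int.natCast_natAbs, Int.cast_abs, Int.cast_sub, hℓ.intCast_round (hD (hC.subset hx)),
      hℓ.intCast_round (hD (hC.subset hy))] at h
  obtain ⟨x₀, hx₀⟩ := hC.nonempty
  refine Metric.diam_le_of_forall_dist_le (by linarith [hspan hx₀ hx₀, abs_nonneg (ℓ x₀ - ℓ x₀)]) ?_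
  rintro _ ⟨x, hx, rfl⟩ _ ⟨y, hy, rfl⟩
  rw [Real.dist_eq]
  linarith [hspan hx hy]

end IsLevelFunctional

theorem ComponentChain.abs_sub_le {p q k : ℕ} {D : Finset Pt} {f : Fin (k + 1) → Finset Pt}
    (hf : ComponentChain q D k f) (hD : ↑D ⊆ LF p q) (hq : 0 < q) {ℓ : Pt → ℝ} {u : Pt}
    (hℓ : IsLevelFunctional p q ℓ u) {x y : Pt} (hx : x ∈ D) (hy : y ∈ D) :
    |ℓ x - ℓ y| ≤ 2 / √3 * q * (bdry D).card := by
  set c := 2 / √3 * q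
  have hc : 1 ≤ c := one_le_mul_of_one_le_of_one_le one_le_two_div_sqrt_three (by exact_mod_cast hq)
  have hpiece (i : Fin (k + 1)) : Metric.diam (ℓ '' f i) + c ≤ c * (f i ∩ bdry D).card := by
    have h := hℓ.diam_image_le hD (hf.isComponent i)
    have h1 : (1 : ℝ) ≤ (f i ∩ bdry D).card := by linarith [Metric.diam_nonneg (s := ℓ '' f i)]
    nlinarith
  have hlink (i : Fin (k + 1)) (hi : 1 ≤ (i : ℕ)) :
      ∃ j < i, ∃ a ∈ ℓ '' f i, ∃ b ∈ ℓ '' f j, dist a b ≤ c := by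
    obtain ⟨j, hj, a, ha, b, hb, hab⟩ := hf.link i hi
    refine ⟨j, hj, ℓ a, ⟨a, ha, rfl⟩, ℓ b, ⟨b, hb, rfl⟩, (hℓ.abs_sub_le a b).trans ?_⟩
    exact mul_le_mul_of_nonneg_left hab (by positivity)
  have hbdd : Bornology.IsBounded (⋃ i, ℓ '' f i) :=
    (Set.finite_iUnion fun i => (f i).finite_toSet.image ℓ).isBounded
  have hmem {z : Pt} (hz : z ∈ D) : ℓ z ∈ ⋃ i, ℓ '' f i := by
    obtain ⟨i, hi⟩ := hf.cover z hz
    exact Set.mem_iUnion.mpr ⟨i, z, hi, rfl⟩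
  calc |ℓ x - ℓ y| = dist (ℓ x) (ℓ y) := (Real.dist_eq _ _).symm
    _ ≤ Metric.diam (⋃ i, ℓ '' f i) := Metric.dist_le_diam_of_mem hbdd (hmem hx) (hmem hy)
    _ ≤ ∑ i, Metric.diam (ℓ '' f i) + k * c := Metric.diam_iUnion_le_of_chain _ hlink
    _ ≤ ∑ i, (Metric.diam (ℓ '' f i) + c) := by
      rw [Finset.sum_add_distrib, Finset.sum_const, Finset.card_univ, Fintype.card_fin,
        nsmul_eq_mul]
      push_cast
      linarith
    _ ≤ ∑ i, c * (f i ∩ bdry D).card := Finset.sum_le_sum fun i _ => hpiece i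
    _ ≤ c * (bdry D).card := by
      rw [← Finset.mul_sum]
      gcongr
      exact_mod_cast hf.sum_card_inter_le _

theorem diam_le_of_almostConnected_general
    (p q : ℕ) (hq : 0 < q)
    (n : ℕ) (D : Finset Pt) (hD : D ∈ Cn p q n) (hne : D.Nonempty)
    (hac : AlmostConnected q D) :
    ∀ x ∈ D, ∀ y ∈ D, dE x y ≤ Real.pi * (q : ℝ) * ((bdry D).card : ℝ) := by
  obtain ⟨k, f, hf⟩ := hac.exists_componentChain hne
  intro x hx y hy
  have bound {ℓ : Pt → ℝ} {u : Pt} (hℓ : IsLevelFunctional p q ℓ u) :=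
    hf.abs_sub_le hD.1 hq hℓ hx hy
  calc dE x y ≤ _ := dE_le_max_abs_coord p q x y
    _ ≤ 2 / √3 * q * (bdry D).card :=
      max_le (bound (isLevelFunctional_coord1 p q)) <| max_le (bound (isLevelFunctional_coord2 p q))
        (bound (isLevelFunctional_coord1_add_coord2 p q))
    _ ≤ Real.pi * q * (bdry D).card := by gcongr; exact two_div_sqrt_three_le_pi

/-- an almost-connected configuration has diameter at most
`π q #∂D_n`, i.e. `|x - y| ≤ π q #∂D_n` for all atoms `x, y`. -/
theorem diam_le_of_almostConnected
    (cF cS : ℝ) (hcF : 0 < cF) (hcS : 0 < cS)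
    (p q : ℕ) (hp : 0 < p) (hq : 0 < q) (hpq : Nat.Coprime p q)
    (n : ℕ) (D : Finset Pt) (hD : D ∈ Cn p q n) (hne : D.Nonempty)
    (hac : AlmostConnected q D) :
    ∀ x ∈ D, ∀ y ∈ D, dE x y ≤ Real.pi * (q : ℝ) * ((bdry D).card : ℝ) :=
  diam_le_of_almostConnected_general p q hq n D hD hne hac
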